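/- Let b be a radial magnetic field on the open unit disc and let q be a trajectory of b with q(0) in the open unit disc and q(0) ≠ 0. Assume hypothesis H1: liminf_{r→1⁻} |(1/2π)∫_{‖q(0)‖≤‖x‖≤r} b(x) dx − det(q(0), q̇(0))| > ‖q̇(0)‖. Then the maximal solution exists for all t ≥ 0 and there exists η ∈ [0,1) such that ‖q(t)‖ < η for all t ≥ 0. -/

import Mathlib

/-!
Along a trajectory of the radial field `b = β(‖·‖)` the speed `‖q̇‖` and the angular momentum
`det(q, q̇) + G(‖q‖)` are conserved. If `q` reaches the circle `‖x‖ = η` at time `t`, then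
`|(1/2π) ∫_{‖q(0)‖ ≤ ‖x‖ ≤ η} b − det(q(0), q̇(0))| = |det(q(t), q̇(t))| ≤ η ‖q̇(0)‖`,
which H1 excludes for every `η < 1` close enough to `1`; so the first time `q` reaches such a
circle gives a contradiction. For global existence, `β` is replaced by a bounded Lipschitz function
agreeing with it on some `[0, c]`, `c > η`, and the velocity is written as `‖q̇(0)‖ e^{iθ}`: the
system for `(q, θ)` is globally Lipschitz and bounded, hence has a global solution, and the same
barrier keeps it where the two fields agree.
-/

open Filter MeasureTheory Set

/-- The planar determinant `det(u,v) = u₁v₂ − u₂v₁`, for `ℝ²` identified with `ℂ`. -/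
noncomputable def det2 (u v : ℂ) : ℝ := u.re * v.im - u.im * v.re

open Complex
open scoped NNReal Topology ComplexConjugate

theorem exists_isIntegralCurve_of_lipschitzWith_of_bounded {E : Type*} [NormedAddCommGroup E]
    [NormedSpace ℝ E] [CompleteSpace E] {w : E → E} {K : ℝ≥0} (hw : LipschitzWith K w) {C : ℝ}
    (hC : ∀ x, ‖w x‖ ≤ C) (x₀ : E) :
    ∃ γ : ℝ → E, γ 0 = x₀ ∧ IsIntegralCurve γ (fun _ ↦ w) := by
  have hloc (n : ℕ) : ∃ γ : ℝ → E, γ 0 = x₀ ∧ ∀ t ∈ Ioo (-n : ℝ) n, HasDerivAt γ (w (γ t)) t := by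
    have hPL : IsPicardLindelof (fun _ ↦ w) (tmin := -n) (tmax := n)
        ⟨0, by simp, by simp⟩ x₀ (C.toNNReal * n) 0 C.toNNReal K :=
      { lipschitzOnWith := fun _ _ ↦ hw.lipschitzOnWith
        continuousOn := fun _ _ ↦ continuousOn_const
        norm_le := fun _ _ x _ ↦ (hC x).trans (Real.le_coe_toNNReal C)
        mul_max_le := by simp }
    obtain ⟨γ, hγ0, hγ⟩ := hPL.exists_eq_forall_mem_Icc_hasDerivWithinAt₀
    exact ⟨γ, hγ0, fun t ht ↦ (hγ t (Ioo_subset_Icc_self ht)).hasDerivAt (Icc_mem_nhds ht.1 ht.2)⟩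
  choose γ hγ0 hγ using hloc
  have hglue (m n : ℕ) (t : ℝ) (hm : |t| < m) (hn : |t| < n) : γ m t = γ n t := by
    have hsub (k : ℕ) (hk : min (m : ℝ) n ≤ k) : Ioo (-min (m : ℝ) n) (min m n) ⊆ Ioo (-k : ℝ) k :=
      Ioo_subset_Ioo (neg_le_neg hk) hk
    have hmn : |t| < min (m : ℝ) n := lt_min hm hn
    refine ODE_solution_unique_of_mem_Ioo (v := fun _ ↦ w) (s := fun _ ↦ univ)
      (fun _ _ ↦ hw.lipschitzOnWith) (t₀ := 0)
      ⟨by linarith [abs_nonneg t], by linarith [abs_nonneg t]⟩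
      (fun s hs ↦ ⟨hγ m s (hsub m (min_le_left _ _) hs), trivial⟩)
      (fun s hs ↦ ⟨hγ n s (hsub n (min_le_right _ _) hs), trivial⟩)
      (by rw [hγ0, hγ0]) (abs_lt.mp hmn)
  refine ⟨fun t ↦ γ (⌊|t|⌋₊ + 1) t, hγ0 _, fun t ↦ ?_⟩
  have hlt (s : ℝ) : |s| < (⌊|s|⌋₊ + 1 : ℕ) := by push_cast; exact Nat.lt_floor_add_one _
  obtain ⟨h₁, h₂⟩ := abs_lt.mp (hlt t)
  have heq : (fun s ↦ γ (⌊|s|⌋₊ + 1) s) =ᶠ[𝓝 t] γ (⌊|t|⌋₊ + 1) :=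
    eventually_of_mem (Ioo_mem_nhds h₁ h₂) fun s hs ↦ hglue _ _ s (hlt s) (abs_lt.mpr hs)
  exact (hγ _ t ⟨h₁, h₂⟩).congr_of_eventuallyEq heq

theorem contDiff_two_of_hasDerivAt {E : Type*} [NormedAddCommGroup E] [NormedSpace ℝ E]
    {x v a : ℝ → E} (hx : ∀ t, HasDerivAt x (v t) t) (hv : ∀ t, HasDerivAt v (a t) t)
    (ha : Continuous a) : ContDiff ℝ 2 x := by
  have hderiv_x : deriv x = v := funext fun t ↦ (hx t).deriv
  have hderiv_v : deriv v = a := funext fun t ↦ (hv t).deriv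
  rw [← one_add_one_eq_two, contDiff_succ_iff_deriv, hderiv_x, contDiff_one_iff_deriv, hderiv_v]
  exact ⟨fun t ↦ (hx t).differentiableAt, by simp, fun t ↦ (hv t).differentiableAt, ha⟩

theorem exists_lipschitzWith_bounded_eqOn_Icc {β : ℝ → ℝ} {s : Set ℝ}
    (hβ : LocallyLipschitzOn s β) {a b : ℝ} (hab : a ≤ b) (hs : Icc a b ⊆ s) :
    ∃ (f : ℝ → ℝ) (K : ℝ≥0) (B : ℝ), LipschitzWith K f ∧ (∀ r, ‖f r‖ ≤ B) ∧
      EqOn f β (Icc a b) := by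
  obtain ⟨K, hK⟩ := (hβ.mono hs).exists_lipschitzOnWith_of_compact isCompact_Icc
  obtain ⟨B, hB⟩ := isCompact_Icc.exists_bound_of_continuousOn hK.continuousOn
  refine ⟨IccExtend hab ((Icc a b).domRestrict β), K * 1, B,
    hK.to_restrict.comp (LipschitzWith.projIcc hab), fun r ↦ hB _ (projIcc a b hab r).2,
    fun r hr ↦ IccExtend_of_mem _ _ hr⟩

theorem exists_lt_forall_Ioo_lt_of_lt_liminf {u : ℝ → ℝ} {a b : ℝ}
    (h : (a : EReal) < liminf (fun r ↦ (u r : EReal)) (𝓝[<] b)) :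
    ∃ b₀ < b, ∀ r ∈ Ioo b₀ b, a < u r := by
  obtain ⟨b₀, hb₀, hsub⟩ := mem_nhdsLT_iff_exists_Ioo_subset.1 (eventually_lt_of_lt_liminf h)
  exact ⟨b₀, hb₀, fun r hr ↦ EReal.coe_lt_coe_iff.1 (hsub hr)⟩

theorem exists_mem_Icc_eq_forall_le {φ : ℝ → ℝ} {a b η : ℝ} (hab : a ≤ b)
    (hφ : ContinuousOn φ (Icc a b)) (ha : φ a ≤ η) (hb : η ≤ φ b) :
    ∃ c ∈ Icc a b, φ c = η ∧ ∀ s ∈ Icc a c, φ s ≤ η := by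
  set S := Icc a b ∩ φ ⁻¹' Ici η
  have hS : IsCompact S :=
    isCompact_Icc.of_isClosed_subset (hφ.preimage_isClosed_of_isClosed isClosed_Icc isClosed_Ici)
      inter_subset_left
  obtain ⟨c, hcS, hcmin⟩ := hS.exists_isLeast ⟨b, right_mem_Icc.2 hab, hb⟩
  have hmin (s : ℝ) (hs : s ∈ Icc a c) (hηs : η ≤ φ s) : s = c :=
    le_antisymm hs.2 (hcmin ⟨⟨hs.1, hs.2.trans hcS.1.2⟩, hηs⟩)
  obtain ⟨d, hd, hφd⟩ := intermediate_value_Icc hcS.1.1 (hφ.mono (Icc_subset_Icc_right hcS.1.2))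
    ⟨ha, hcS.2⟩
  have hφc : φ c = η := hmin d hd hφd.ge ▸ hφd
  exact ⟨c, hcS.1, hφc, fun s hs ↦ not_lt.1 fun hlt ↦ hlt.ne' (hmin s hs hlt.le ▸ hφc)⟩

theorem eq_of_hasDerivAt_zero_Icc {φ : ℝ → ℝ} {a b : ℝ} (h : ∀ t ∈ Icc a b, HasDerivAt φ 0 t) :
    ∀ t ∈ Icc a b, φ t = φ a :=
  constant_of_has_deriv_right_zero (HasDerivAt.continuousOn h)
    fun t ht ↦ (h t (Ico_subset_Icc_self ht)).hasDerivWithinAt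

theorem integral_annulus (f : ℝ → ℝ) {r₀ r : ℝ} (h₀ : 0 ≤ r₀) (hr : r₀ ≤ r) :
    ∫ x in {x : ℂ | r₀ ≤ ‖x‖ ∧ ‖x‖ ≤ r}, f ‖x‖ = 2 * Real.pi * ∫ y in r₀..r, y * f y := by
  have hvanish (y : ℝ) (hy : y ∉ Ioi 0) : (Icc r₀ r).indicator (fun y ↦ y * f y) y = 0 := by
    by_cases hmem : y ∈ Icc r₀ r
    · rw [indicator_of_mem hmem, le_antisymm (not_lt.1 hy) (h₀.trans hmem.1), zero_mul]
    · exact indicator_of_notMem hmem _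
  have hind : (norm ⁻¹' Icc r₀ r).indicator (fun x : ℂ ↦ f ‖x‖) =
      fun x ↦ (Icc r₀ r).indicator f ‖x‖ :=
    funext fun _ ↦ indicator_comp_right _
  have hpow (y : ℝ) : y ^ (2 - 1) * (Icc r₀ r).indicator f y =
      (Icc r₀ r).indicator (fun y ↦ y * f y) y := by
    rw [indicator_mul_right, pow_one]
  rw [show {x : ℂ | r₀ ≤ ‖x‖ ∧ ‖x‖ ≤ r} = norm ⁻¹' Icc r₀ r from rfl,
    ← integral_indicator (measurableSet_Icc.preimage continuous_norm.measurable), hind,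
    integral_fun_norm_addHaar volume, finrank_real_complex, measureReal_def, volume_ball]
  simp only [smul_eq_mul, hpow]
  rw [setIntegral_eq_integral_of_forall_compl_eq_zero hvanish, integral_indicator measurableSet_Icc,
    integral_Icc_eq_integral_Ioc, ← intervalIntegral.integral_of_le hr]
  simp; ring

theorem integral_mul_self_eq_integral_sqrt {f : ℝ → ℝ} (hf : Continuous f) {a b : ℝ}
    (ha : 0 ≤ a) (hb : 0 ≤ b) :
    ∫ y in a..b, y * f y = (∫ σ in a ^ 2..b ^ 2, f √σ) / 2 := by
  have hsubst := intervalIntegral.integral_comp_mul_deriv (a := a) (b := b) (f := fun y ↦ y ^ 2)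
    (f' := fun y ↦ 2 * y) (g := fun σ ↦ f √σ) (fun y _ ↦ by simpa using hasDerivAt_pow 2 y)
    (by fun_prop) (hf.comp Real.continuous_sqrt)
  rw [← hsubst, ← intervalIntegral.integral_div]
  refine intervalIntegral.integral_congr fun y hy ↦ ?_
  have hy0 : 0 ≤ y := le_min ha hb |>.trans hy.1
  simp only [Function.comp_apply, Real.sqrt_sq hy0]
  ring

theorem integral_annulus_eq_integral_sqrt {β f : ℝ → ℝ} (hf : Continuous f) {r₀ r : ℝ}
    (h₀ : 0 ≤ r₀) (hr : r₀ ≤ r) (hfβ : EqOn f β (Icc r₀ r)) :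
    1 / (2 * Real.pi) * ∫ x in {x : ℂ | r₀ ≤ ‖x‖ ∧ ‖x‖ ≤ r}, β ‖x‖ =
      (∫ σ in r₀ ^ 2..r ^ 2, f √σ) / 2 := by
  rw [← setIntegral_congr_fun (s := {x : ℂ | r₀ ≤ ‖x‖ ∧ ‖x‖ ≤ r})
      (measurableSet_Icc.preimage continuous_norm.measurable) fun x hx ↦ hfβ hx,
    integral_annulus f h₀ hr, integral_mul_self_eq_integral_sqrt hf h₀ (h₀.trans hr),
    ← mul_assoc, one_div_mul_cancel (by positivity), one_mul]

theorem abs_det2_le (u v : ℂ) : |det2 u v| ≤ ‖u‖ * ‖v‖ := by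
  have h : det2 u v = (conj u * v).im := by simp [det2, mul_im]; ring
  simpa [h] using abs_im_le_norm (conj u * v)

theorem det2_neg_I_mul (c : ℝ) (u v : ℂ) : det2 u (-I * c * v) = -c * inner ℝ u v := by
  simp [det2, Complex.inner, mul_re, mul_im]; ring

theorem inner_neg_I_mul_self (c : ℝ) (u : ℂ) : inner ℝ u (-I * c * u) = 0 := by
  simp [Complex.inner, mul_re, mul_im]; ring

theorem HasDerivAt.complex_re {x : ℝ → ℂ} {x' : ℂ} {t : ℝ} (h : HasDerivAt x x' t) :
    HasDerivAt (fun s ↦ (x s).re) x'.re t :=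
  reCLM.hasFDerivAt.comp_hasDerivAt t h

theorem HasDerivAt.complex_im {x : ℝ → ℂ} {x' : ℂ} {t : ℝ} (h : HasDerivAt x x' t) :
    HasDerivAt (fun s ↦ (x s).im) x'.im t :=
  imCLM.hasFDerivAt.comp_hasDerivAt t h

theorem HasDerivAt.det2 {x v : ℝ → ℂ} {x' v' : ℂ} {t : ℝ} (hx : HasDerivAt x x' t)
    (hv : HasDerivAt v v' t) :
    HasDerivAt (fun s ↦ det2 (x s) (v s)) (det2 x' (v t) + det2 (x t) v') t := by
  refine ((hx.complex_re.mul hv.complex_im).sub (hx.complex_im.mul hv.complex_re)).congr_deriv ?_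
  simp only [_root_.det2]; ring

/-- For `f = β`, `(∫₀^{‖u‖²} f(√σ) dσ) / 2 = G(‖u‖)`; integrating in `σ = ‖u‖²` keeps the
quantity differentiable along trajectories through the origin. -/
noncomputable def angularMomentum (f : ℝ → ℝ) (u w : ℂ) : ℝ :=
  det2 u w + (∫ σ in (0 : ℝ)..‖u‖ ^ 2, f √σ) / 2

section Conservation

variable {f : ℝ → ℝ} {x v : ℝ → ℂ} {b : ℝ}

theorem norm_eq_of_hasDerivAt_neg_I_mul {c : ℝ → ℝ}
    (hv : ∀ t ∈ Icc 0 b, HasDerivAt v (-I * c t * v t) t) : ∀ t ∈ Icc 0 b, ‖v t‖ = ‖v 0‖ := by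
  have hsq := eq_of_hasDerivAt_zero_Icc fun t ht ↦
    (hv t ht).norm_sq.congr_deriv (by rw [inner_neg_I_mul_self, mul_zero])
  exact fun t ht ↦ (sq_eq_sq₀ (norm_nonneg _) (norm_nonneg _)).1 (hsq t ht)

theorem angularMomentum_eq (hf : Continuous f) (hx : ∀ t ∈ Icc 0 b, HasDerivAt x (v t) t)
    (hv : ∀ t ∈ Icc 0 b, HasDerivAt v (-I * f ‖x t‖ * v t) t) :
    ∀ t ∈ Icc 0 b, angularMomentum f (x t) (v t) = angularMomentum f (x 0) (v 0) := by
  refine eq_of_hasDerivAt_zero_Icc fun t ht ↦ ?_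
  have hG := ((hf.comp Real.continuous_sqrt).integral_hasStrictDerivAt 0 _).hasDerivAt.comp t
    (hx t ht).norm_sq
  refine (((hx t ht).det2 (hv t ht)).add (hG.div_const 2)).congr_deriv ?_
  simp only [Function.comp_apply, Real.sqrt_sq (norm_nonneg _), det2_neg_I_mul]
  simp [det2]; ring

theorem abs_integral_sub_det2_le (hf : Continuous f) (hx : ∀ t ∈ Icc 0 b, HasDerivAt x (v t) t)
    (hv : ∀ t ∈ Icc 0 b, HasDerivAt v (-I * f ‖x t‖ * v t) t) {t : ℝ} (ht : t ∈ Icc 0 b) :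
    |(∫ σ in ‖x 0‖ ^ 2..‖x t‖ ^ 2, f √σ) / 2 - det2 (x 0) (v 0)| ≤ ‖x t‖ * ‖v 0‖ := by
  have hL := angularMomentum_eq hf hx hv t ht
  have hint := intervalIntegral.integral_interval_sub_left
    ((hf.comp Real.continuous_sqrt).intervalIntegrable (μ := volume) 0 (‖x t‖ ^ 2))
    ((hf.comp Real.continuous_sqrt).intervalIntegrable (μ := volume) 0 (‖x 0‖ ^ 2))
  simp only [angularMomentum, Function.comp_def] at hL hint
  calc _ = |det2 (x t) (v t)| := by rw [← hint, ← abs_neg]; congr 1; linarith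
    _ ≤ ‖x t‖ * ‖v 0‖ := by
      rw [← norm_eq_of_hasDerivAt_neg_I_mul hv t ht]; exact abs_det2_le _ _

theorem norm_lt_of_lt_abs_integral_sub_det2 (hf : Continuous f) {x₀ v₀ : ℂ} {η t₀ : ℝ}
    (hη : η ≤ 1) (hx₀ : ‖x₀‖ < η)
    (hH : ‖v₀‖ < |(∫ σ in ‖x₀‖ ^ 2..η ^ 2, f √σ) / 2 - det2 x₀ v₀|)
    (hx0 : x 0 = x₀) (hv0 : v 0 = v₀) (ht₀ : 0 ≤ t₀)
    (hx : ∀ t ∈ Icc 0 t₀, HasDerivAt x (v t) t)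
    (hv : ∀ t ∈ Icc 0 t₀, ‖x t‖ ≤ η → HasDerivAt v (-I * f ‖x t‖ * v t) t) :
    ‖x t₀‖ < η := by
  subst hx0 hv0
  by_contra! hesc
  obtain ⟨c, hc, hxc, hle⟩ :=
    exists_mem_Icc_eq_forall_le ht₀ (HasDerivAt.continuousOn hx).norm hx₀.le hesc
  have hsub : Icc 0 c ⊆ Icc 0 t₀ := Icc_subset_Icc_right hc.2
  have hbound := abs_integral_sub_det2_le hf (fun t ht ↦ hx t (hsub ht))
    (fun t ht ↦ hv t (hsub ht) (hle t ht)) (right_mem_Icc.2 hc.1)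
  rw [hxc] at hbound
  linarith [mul_le_of_le_one_left (norm_nonneg (v 0)) hη]

end Conservation

theorem exists_magnetic_trajectory_of_lipschitzWith {f : ℝ → ℝ} {K : ℝ≥0} {B : ℝ}
    (hf : LipschitzWith K f) (hB : ∀ r, ‖f r‖ ≤ B) (x₀ v₀ : ℂ) :
    ∃ x v : ℝ → ℂ, ContDiff ℝ 2 x ∧ x 0 = x₀ ∧ v 0 = v₀ ∧ (∀ t, HasDerivAt x (v t) t) ∧
      ∀ t, HasDerivAt v (-I * f ‖x t‖ * v t) t := by
  set w : ℂ × ℝ → ℂ × ℝ := fun p ↦ (circleMap 0 ‖v₀‖ p.2, -f ‖p.1‖)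
  obtain ⟨_, hw⟩ : ∃ K', LipschitzWith K' w :=
    ⟨_, (lipschitzWith_circleMap 0 ‖v₀‖ |>.comp LipschitzWith.prod_snd).prodMk
      (hf.comp (lipschitzWith_one_norm.comp LipschitzWith.prod_fst)).neg⟩
  have hwC (p : ℂ × ℝ) : ‖w p‖ ≤ max ‖v₀‖ B := by
    simp only [w, Prod.norm_def, norm_neg, norm_circleMap_zero, abs_norm]
    exact max_le_max le_rfl (hB _)
  obtain ⟨γ, hγ0, hγ⟩ := exists_isIntegralCurve_of_lipschitzWith_of_bounded hw hwC (x₀, arg v₀)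
  set x : ℝ → ℂ := fun t ↦ (γ t).1
  set v : ℝ → ℂ := fun t ↦ circleMap 0 ‖v₀‖ (γ t).2
  have hx (t : ℝ) : HasDerivAt x (v t) t := (hγ t).fst
  have hv (t : ℝ) : HasDerivAt v (-I * f ‖x t‖ * v t) t := by
    refine ((hasDerivAt_circleMap 0 ‖v₀‖ _).scomp t (hγ t).snd).congr_deriv ?_
    simp only [w, real_smul, ofReal_neg]
    ring
  have hfc : Continuous f := hf.continuous
  have hxc : Continuous x := continuous_iff_continuousAt.2 fun t ↦ (hx t).continuousAt
  have hvc : Continuous v := continuous_iff_continuousAt.2 fun t ↦ (hv t).continuousAt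
  refine ⟨x, v, contDiff_two_of_hasDerivAt hx hv (by fun_prop), by simp [x, hγ0], ?_, hx, hv⟩
  simp [v, hγ0, circleMap_zero, norm_mul_exp_arg_mul_I]

theorem confinement_H1_general
    (β : ℝ → ℝ)
    (hβ : ∀ x ∈ Set.Ico (0:ℝ) 1, ∃ K : NNReal,
      ∃ u ∈ nhdsWithin x (Set.Ico (0:ℝ) 1), LipschitzOnWith K β u)
    (q : ℝ → ℂ) (T : ℝ) (hT : 0 < T)
    (hsmooth : ContDiff ℝ 2 q)
    (hNewton : ∀ t ∈ Set.Ico (0:ℝ) T, deriv (deriv q) t = -Complex.I * (β ‖q t‖ : ℂ) * deriv q t)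
    (hin : ∀ t ∈ Set.Ico (0:ℝ) T, ‖q t‖ < 1)
    (hH1 : (‖deriv q 0‖ : EReal) <
      Filter.liminf (fun r : ℝ =>
        ((|(1 / (2 * Real.pi)) * (∫ x in {x : ℂ | ‖q 0‖ ≤ ‖x‖ ∧ ‖x‖ ≤ r}, β ‖x‖)
          - det2 (q 0) (deriv q 0)| : ℝ) : EReal)) (nhdsWithin 1 (Set.Iio 1))) :
    ∃ η ∈ Set.Ico (0:ℝ) 1,
      (∀ t ∈ Set.Ico (0:ℝ) T, ‖q t‖ < η) ∧
      ∃ Q : ℝ → ℂ, ContDiff ℝ 2 Q ∧ Q 0 = q 0 ∧ deriv Q 0 = deriv q 0 ∧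
        ∀ t ∈ Set.Ici (0:ℝ),
          deriv (deriv Q) t = -Complex.I * (β ‖Q t‖ : ℂ) * deriv Q t ∧ ‖Q t‖ < η := by
  obtain ⟨η₀, hη₀, hH1'⟩ := exists_lt_forall_Ioo_lt_of_lt_liminf hH1
  have hq0 : ‖q 0‖ < 1 := hin 0 ⟨le_rfl, hT⟩
  obtain ⟨η, hη, hη1⟩ := exists_between (max_lt hη₀ hq0)
  have hq0η : ‖q 0‖ < η := (le_max_right _ _).trans_lt hη
  obtain ⟨c, hηc, hc1⟩ := exists_between hη1
  obtain ⟨f, K, B, hfK, hfB, hfβ⟩ := exists_lipschitzWith_bounded_eqOn_Icc (fun x hx ↦ hβ x hx)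
    ((norm_nonneg _).trans (hq0η.trans hηc).le) (Icc_subset_Ico_right hc1)
  have hfc : Continuous f := hfK.continuous
  have hβf (x : ℂ) (hx : ‖x‖ ≤ η) : β ‖x‖ = f ‖x‖ := (hfβ ⟨norm_nonneg x, hx.trans hηc.le⟩).symm
  have hH1η : ‖deriv q 0‖ < |(∫ σ in ‖q 0‖ ^ 2..η ^ 2, f √σ) / 2 - det2 (q 0) (deriv q 0)| := by
    rw [← integral_annulus_eq_integral_sqrt hfc (norm_nonneg _) hq0η.le
      (hfβ.mono (Icc_subset_Icc (norm_nonneg _) hηc.le))]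
    exact hH1' η ⟨(le_max_left _ _).trans_lt hη, hη1⟩
  obtain ⟨Q, V, hQ2, hQ0, hV0, hQ, hV⟩ :=
    exists_magnetic_trajectory_of_lipschitzWith hfK hfB (q 0) (deriv q 0)
  have hQη (t : ℝ) (ht : 0 ≤ t) : ‖Q t‖ < η :=
    norm_lt_of_lt_abs_integral_sub_det2 hfc hη1.le hq0η hH1η hQ0 hV0 ht
      (fun s _ ↦ hQ s) fun s _ _ ↦ hV s
  have hQ' : deriv Q = V := funext fun t ↦ (hQ t).deriv
  refine ⟨η, ⟨hq0η.le.trans' (norm_nonneg _), hη1⟩, fun t ht ↦ ?_, Q, hQ2, hQ0,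
    hQ' ▸ hV0, fun t ht ↦ ?_⟩
  · refine norm_lt_of_lt_abs_integral_sub_det2 hfc hη1.le hq0η hH1η rfl rfl ht.1
      (fun s _ ↦ (hsmooth.differentiable two_ne_zero s).hasDerivAt) fun s hs hsη ↦ ?_
    rw [← hβf _ hsη, ← hNewton s ⟨hs.1, hs.2.trans_lt ht.2⟩]
    exact (hsmooth.differentiable_deriv_two s).hasDerivAt
  · rw [hQ', (hV t).deriv, hβf _ (hQη t ht).le]
    exact ⟨rfl, hQη t ht⟩

/-- Let `b(q) = β(‖q‖)` be a radial magnetic field on the open unit disc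
(`β` locally Lipschitz on `[0,1)`) and let `q` be a trajectory of `b` (a `C²` solution
of Newton's equation `q̈ = −i·b(q)·q̇`) with `q(0)` in the open unit disc, `q(0) ≠ 0`.
Assume H1:
`liminf_{r→1⁻} |(1/2π)∫_{‖q(0)‖≤‖x‖≤r} b(x)dx − det(q(0),q̇(0))| > ‖q̇(0)‖`.
Then the maximal solution exists for all `t ≥ 0` and there is `η ∈ [0,1)` such that
`‖q(t)‖ < η` for all `t ≥ 0`: for the given trajectory on `[0,T)` we have `‖q t‖ < η`,
and there is a globally defined trajectory `Q` with the same initial data confined in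
the ball of radius `η`. -/
theorem confinement_H1
    (β : ℝ → ℝ)
    (hβ : ∀ x ∈ Set.Ico (0:ℝ) 1, ∃ K : NNReal,
      ∃ u ∈ nhdsWithin x (Set.Ico (0:ℝ) 1), LipschitzOnWith K β u)
    (q : ℝ → ℂ) (T : ℝ) (hT : 0 < T)
    (hsmooth : ContDiff ℝ 2 q)
    (hNewton : ∀ t ∈ Set.Ico (0:ℝ) T, deriv (deriv q) t = -Complex.I * (β ‖q t‖ : ℂ) * deriv q t)
    (hin : ∀ t ∈ Set.Ico (0:ℝ) T, ‖q t‖ < 1)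
    (h0ne : q 0 ≠ 0)
    (hH1 : (‖deriv q 0‖ : EReal) <
      Filter.liminf (fun r : ℝ =>
        ((|(1 / (2 * Real.pi)) * (∫ x in {x : ℂ | ‖q 0‖ ≤ ‖x‖ ∧ ‖x‖ ≤ r}, β ‖x‖)
          - det2 (q 0) (deriv q 0)| : ℝ) : EReal)) (nhdsWithin 1 (Set.Iio 1))) :
    ∃ η ∈ Set.Ico (0:ℝ) 1,
      (∀ t ∈ Set.Ico (0:ℝ) T, ‖q t‖ < η) ∧
      ∃ Q : ℝ → ℂ, ContDiff ℝ 2 Q ∧ Q 0 = q 0 ∧ deriv Q 0 = deriv q 0 ∧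
        ∀ t ∈ Set.Ici (0:ℝ),
          deriv (deriv Q) t = -Complex.I * (β ‖Q t‖ : ℂ) * deriv Q t ∧ ‖Q t‖ < η :=
  confinement_H1_general β hβ q T hT hsmooth hNewton hin hH1
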